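/- Monotonicity of mixtures in the hockey-stick divergence: for 0 ≤ λ ≤ λ' ≤ 1, distributions P₀, P₁, and any κ ≥ 0, writing Q_λ := (1−λ)P₀ + λP₁, one has H_κ(Q_{λ'} ‖ P₁) ≤ H_κ(Q_λ ‖ P₁) and H_κ(P₁ ‖ Q_{λ'}) ≤ H_κ(P₁ ‖ Q_λ). -/

import Mathlib

/-!
With `t = (1 - λ') / (1 - λ)` one has `Q_{λ'} = t Q_λ + (1 - t) P₁` and `P₁ = t P₁ + (1 - t) P₁`,
so both inequalities compare `H_κ` at a pair with the same pair mixed with `(P₁, P₁)`. By joint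
convexity of `H_κ` the mixed value is at most `t H + (1 - t) H_κ(P₁‖P₁)`, and
`H_κ(P₁‖P₁) = [1 - κ]₊` is a lower bound for `H_κ` on any pair of densities, since
`∫ (P - κ Q) = 1 - κ`.
-/

open MeasureTheory

lemma max_zero_convex_comb_le {t : ℝ} (ht0 : 0 ≤ t) (ht1 : t ≤ 1) (a b : ℝ) :
    max (t * a + (1 - t) * b) 0 ≤ t * max a 0 + (1 - t) * max b 0 := by
  have ht1' : 0 ≤ 1 - t := sub_nonneg.mpr ht1
  refine max_le ?_ (by positivity)
  gcongr <;> exact le_max_left _ _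

/-- `H_κ(P‖Q)` for densities `p`, `q` of `P`, `Q` with respect to `μ`. -/
noncomputable def hockeyStick {Ω : Type*} [MeasurableSpace Ω] (μ : Measure Ω) (κ : ℝ)
    (p q : Ω → ℝ) : ℝ :=
  ∫ ω, max (p ω - κ * q ω) 0 ∂μ

namespace hockeyStick

variable {Ω : Type*} [MeasurableSpace Ω] {μ : Measure Ω} {κ : ℝ} {p q r p' q' : Ω → ℝ}

lemma nonneg : 0 ≤ hockeyStick μ κ p q :=
  integral_nonneg fun _ => le_max_right _ _

lemma integrable (hp : Integrable p μ) (hq : Integrable q μ) :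
    Integrable (fun ω => max (p ω - κ * q ω) 0) μ :=
  (hp.sub (hq.const_mul κ)).pos_part

lemma self (hr : ∀ ω, 0 ≤ r ω) (hr1 : ∫ ω, r ω ∂μ = 1) :
    hockeyStick μ κ r r = max (1 - κ) 0 := by
  have hpt : ∀ ω, max (r ω - κ * r ω) 0 = max (1 - κ) 0 * r ω := fun ω => by
    rw [max_mul_of_nonneg _ _ (hr ω), zero_mul, one_sub_mul]
  simp only [hockeyStick, hpt, integral_const_mul, hr1, mul_one]

lemma max_one_sub_le (hp : Integrable p μ) (hq : Integrable q μ)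
    (hp1 : ∫ ω, p ω ∂μ = 1) (hq1 : ∫ ω, q ω ∂μ = 1) :
    max (1 - κ) 0 ≤ hockeyStick μ κ p q := by
  refine max_le ?_ nonneg
  calc 1 - κ = ∫ ω, (p ω - κ * q ω) ∂μ := by
        rw [integral_sub hp (hq.const_mul κ), integral_const_mul, hp1, hq1, mul_one]
    _ ≤ hockeyStick μ κ p q :=
        integral_mono (hp.sub (hq.const_mul κ)) (integrable hp hq) fun _ => le_max_left _ _

lemma convex_comb_le {t : ℝ} (ht0 : 0 ≤ t) (ht1 : t ≤ 1)
    (hp : Integrable p μ) (hq : Integrable q μ) (hp' : Integrable p' μ) (hq' : Integrable q' μ) :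
    hockeyStick μ κ (fun ω => t * p ω + (1 - t) * p' ω) (fun ω => t * q ω + (1 - t) * q' ω)
      ≤ t * hockeyStick μ κ p q + (1 - t) * hockeyStick μ κ p' q' := by
  have hpt : ∀ ω, (t * p ω + (1 - t) * p' ω) - κ * (t * q ω + (1 - t) * q' ω)
      = t * (p ω - κ * q ω) + (1 - t) * (p' ω - κ * q' ω) := fun ω => by ring
  have hf := (integrable (κ := κ) hp hq).const_mul t
  have hf' := (integrable (κ := κ) hp' hq').const_mul (1 - t)
  unfold hockeyStick
  rw [← integral_const_mul, ← integral_const_mul, ← integral_add hf hf']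
  refine integral_mono ?_ (hf.add hf') fun ω => ?_
  · simpa only [Pi.add_apply, hpt] using integrable (κ := κ) ((hp.const_mul t).add (hp'.const_mul (1 - t)))
      ((hq.const_mul t).add (hq'.const_mul (1 - t)))
  · simpa only [hpt] using max_zero_convex_comb_le ht0 ht1 _ _

lemma mix_common_le {t : ℝ} (ht0 : 0 ≤ t) (ht1 : t ≤ 1)
    (hp : Integrable p μ) (hq : Integrable q μ) (hr : Integrable r μ)
    (hp1 : ∫ ω, p ω ∂μ = 1) (hq1 : ∫ ω, q ω ∂μ = 1)
    (hr0 : ∀ ω, 0 ≤ r ω) (hr1 : ∫ ω, r ω ∂μ = 1) :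
    hockeyStick μ κ (fun ω => t * p ω + (1 - t) * r ω) (fun ω => t * q ω + (1 - t) * r ω)
      ≤ hockeyStick μ κ p q := by
  have hself : hockeyStick μ κ r r ≤ hockeyStick μ κ p q :=
    (self hr0 hr1).trans_le (max_one_sub_le hp hq hp1 hq1)
  calc _ ≤ t * hockeyStick μ κ p q + (1 - t) * hockeyStick μ κ r r :=
        convex_comb_le ht0 ht1 hp hq hr hr
    _ ≤ t * hockeyStick μ κ p q + (1 - t) * hockeyStick μ κ p q := by
        gcongr
    _ = hockeyStick μ κ p q := by ring

end hockeyStick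

theorem hockey_stick_mixture_monotone_general {Ω : Type*} [MeasurableSpace Ω] (μ : Measure Ω)
    (p₀ p₁ : Ω → ℝ) (κ lam lam' : ℝ)
    (hll : lam ≤ lam') (hl1 : lam' ≤ 1)
    (hp₁ : ∀ ω, 0 ≤ p₁ ω)
    (hp₀1 : ∫ ω, p₀ ω ∂μ = 1) (hp₁1 : ∫ ω, p₁ ω ∂μ = 1)
    (hint₀ : Integrable p₀ μ) (hint₁ : Integrable p₁ μ) :
    (∫ ω, max (((1 - lam') * p₀ ω + lam' * p₁ ω) - κ * p₁ ω) 0 ∂μ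
        ≤ ∫ ω, max (((1 - lam) * p₀ ω + lam * p₁ ω) - κ * p₁ ω) 0 ∂μ)
    ∧ (∫ ω, max (p₁ ω - κ * ((1 - lam') * p₀ ω + lam' * p₁ ω)) 0 ∂μ
        ≤ ∫ ω, max (p₁ ω - κ * ((1 - lam) * p₀ ω + lam * p₁ ω)) 0 ∂μ) := by
  -- `Q_{λ'} = t Q_λ + (1 - t) P₁`; for `λ = 1` the junk value `t = 0 / 0 = 0` still works.
  set t := (1 - lam') / (1 - lam)
  have ht0 : 0 ≤ t := div_nonneg (by linarith) (by linarith)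
  have ht1 : t ≤ 1 := div_le_one_of_le₀ (by linarith) (by linarith)
  have htl : t * (1 - lam) = 1 - lam' := div_mul_cancel_of_imp fun h => by linarith
  set Q := fun ω => (1 - lam) * p₀ ω + lam * p₁ ω
  have hQ : Integrable Q μ := (hint₀.const_mul _).add (hint₁.const_mul _)
  have hQ1 : ∫ ω, Q ω ∂μ = 1 := by
    rw [integral_add (hint₀.const_mul _) (hint₁.const_mul _), integral_const_mul,
      integral_const_mul, hp₀1, hp₁1]
    ring
  have hmix : ∀ ω, t * Q ω + (1 - t) * p₁ ω = (1 - lam') * p₀ ω + lam' * p₁ ω := fun ω => by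
    linear_combination (p₀ ω - p₁ ω) * htl
  have hself : ∀ ω, t * p₁ ω + (1 - t) * p₁ ω = p₁ ω := fun ω => by ring
  constructor
  · simpa only [hockeyStick, hmix, hself] using
      hockeyStick.mix_common_le (κ := κ) ht0 ht1 hQ hint₁ hint₁ hQ1 hp₁1 hp₁ hp₁1
  · simpa only [hockeyStick, hmix, hself] using
      hockeyStick.mix_common_le (κ := κ) ht0 ht1 hint₁ hQ hint₁ hp₁1 hQ1 hp₁ hp₁1

/-- Monotonicity of mixtures in the hockey-stick divergence: with
`Q_λ := (1−λ)P₀ + λP₁`, both `H_κ(Q_{λ'}‖P₁) ≤ H_κ(Q_λ‖P₁)` and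
`H_κ(P₁‖Q_{λ'}) ≤ H_κ(P₁‖Q_λ)` for `λ ≤ λ'`. -/
theorem hockey_stick_mixture_monotone {Ω : Type*} [MeasurableSpace Ω] (μ : Measure Ω)
    (p₀ p₁ : Ω → ℝ) (κ lam lam' : ℝ) (hκ : 0 ≤ κ)
    (hl0 : 0 ≤ lam) (hll : lam ≤ lam') (hl1 : lam' ≤ 1)
    (hp₀ : ∀ ω, 0 ≤ p₀ ω) (hp₁ : ∀ ω, 0 ≤ p₁ ω)
    (hp₀1 : ∫ ω, p₀ ω ∂μ = 1) (hp₁1 : ∫ ω, p₁ ω ∂μ = 1)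
    (hint₀ : Integrable p₀ μ) (hint₁ : Integrable p₁ μ) :
    (∫ ω, max (((1 - lam') * p₀ ω + lam' * p₁ ω) - κ * p₁ ω) 0 ∂μ
        ≤ ∫ ω, max (((1 - lam) * p₀ ω + lam * p₁ ω) - κ * p₁ ω) 0 ∂μ)
    ∧ (∫ ω, max (p₁ ω - κ * ((1 - lam') * p₀ ω + lam' * p₁ ω)) 0 ∂μ
        ≤ ∫ ω, max (p₁ ω - κ * ((1 - lam) * p₀ ω + lam * p₁ ω)) 0 ∂μ) :=
  hockey_stick_mixture_monotone_general μ p₀ p₁ κ lam lam' hll hl1 hp₁ hp₀1 hp₁1 hint₀ hint₁
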